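/- Let F, G ∈ 𝓡_{−α} with α > 0 be distributions of i.i.d. FGM pairs {(X_i,Y_i)} with parameter θ ∈ [-1,1], where additionally F(−x) = O(F̄(x)). Then for any fixed n ≥ 2 and ε ∈ (0,1), P(X_i^− > ux, S_n > x, T_n > y) = o(F̄((u∨1)x) Ḡ(y)) as x ∧ y → ∞, uniformly for u ≥ ε, where X^− = max(−X, 0), S_n = Σ X_i, T_n = Σ Y_i. -/

import Mathlib

open MeasureTheory Filter Real Set Asymptotics

/-- Tail of a distribution (measure) on ℝ. -/
noncomputable def mtail (μ : Measure ℝ) (x : ℝ) : ℝ := (μ (Set.Ioi x)).toReal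

/-- The exponential-like-tailed class 𝓛(γ). -/
def memL (μ : Measure ℝ) (γ : ℝ) : Prop :=
  ∀ y : ℝ, Tendsto (fun x => mtail μ (x - y) / mtail μ x) atTop (nhds (Real.exp (γ * y)))

/-- V̂(γ) = ∫ e^{γ x} V(dx). -/
noncomputable def mgfAt (μ : Measure ℝ) (γ : ℝ) : ℝ := ∫ x, Real.exp (γ * x) ∂μ

/-- The convolution-equivalent class 𝓢(γ). -/
def memS (μ : Measure ℝ) (γ : ℝ) : Prop :=
  memL μ γ ∧
    Tendsto (fun x => mtail (Measure.conv μ μ) x / mtail μ x) atTop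
      (nhds (2 * mgfAt μ γ))

section Aux

lemma mtail_nonneg' (μ : Measure ℝ) (x : ℝ) : 0 ≤ mtail μ x := ENNReal.toReal_nonneg

lemma mtail_anti' (μ : Measure ℝ) [IsFiniteMeasure μ] : Antitone (mtail μ) := by
  intro a b hab
  exact ENNReal.toReal_mono (measure_ne_top μ _) (measure_mono (Set.Ioi_subset_Ioi hab))

lemma cdf_add_mtail' (F : Measure ℝ) [IsProbabilityMeasure F] (a : ℝ) :
    (F (Set.Iic a)).toReal + mtail F a = 1 := by
  have h : F (Set.Iic a) + F (Set.Ioi a) = 1 := by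
    rw [← measure_union (Set.Iic_disjoint_Ioi le_rfl) measurableSet_Ioi, Set.Iic_union_Ioi,
      measure_univ]
  have := congrArg ENNReal.toReal h
  rwa [ENNReal.toReal_add (measure_ne_top F _) (measure_ne_top F _), ENNReal.toReal_one] at this

lemma mtail_tendsto_zero' (F : Measure ℝ) [IsProbabilityMeasure F] :
    Tendsto (mtail F) atTop (nhds 0) := by
  have h1 : Tendsto (fun x => (F (Set.Iic x)).toReal) atTop (nhds 1) := by
    have := tendsto_measure_Iic_atTop F
    rw [measure_univ] at this
    have h2 := (ENNReal.tendsto_toReal (by simp)).comp this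
    exact h2
  have h3 : Tendsto (fun x => 1 - (F (Set.Iic x)).toReal) atTop (nhds (1 - 1)) :=
    tendsto_const_nhds.sub h1
  simp only [sub_self] at h3
  refine h3.congr (fun x => ?_)
  have := cdf_add_mtail' F x
  linarith

lemma ratio_bound' {f g : ℝ → ℝ} (hnn : ∀ x, 0 ≤ f x) {L : ℝ} (hL : 0 < L)
    (h : Tendsto (fun x => g x / f x) atTop (nhds L)) :
    ∃ M : ℝ, ∀ x ≥ M, g x ≤ (L + 1) * f x := by
  have hev : ∀ᶠ x in atTop, g x / f x ∈ Set.Ioo (L / 2) (L + 1) :=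
    h.eventually (Ioo_mem_nhds (by linarith) (by linarith))
  obtain ⟨M, hM⟩ := hev.exists_forall_of_atTop
  refine ⟨M, fun x hx => ?_⟩
  obtain ⟨h1, h2⟩ := hM x hx
  have hf : 0 < f x := by
    rcases (hnn x).lt_or_eq with h | h
    · exact h
    · exfalso; rw [← h, div_zero] at h1; linarith
  calc g x = g x / f x * f x := by field_simp
    _ ≤ (L + 1) * f x := mul_le_mul_of_nonneg_right h2.le (hnn x)

lemma indep3' {Ω : Type*} [MeasurableSpace Ω] {P : Measure Ω} {f : ℕ → Ω → ℝ × ℝ}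
    (h : ProbabilityTheory.iIndepFun f P)
    {a b c : ℕ} (hab : a ≠ b) (hac : a ≠ c) (hbc : b ≠ c)
    {S T U : Set (ℝ × ℝ)} (hS : MeasurableSet S) (hT : MeasurableSet T)
    (hU : MeasurableSet U) :
    P (f a ⁻¹' S ∩ f b ⁻¹' T ∩ f c ⁻¹' U)
      = P (f a ⁻¹' S) * P (f b ⁻¹' T) * P (f c ⁻¹' U) := by
  classical
  set sets : ℕ → Set (ℝ × ℝ) := fun l => if l = a then S else if l = b then T
    else if l = c then U else Set.univ with hsets
  have H := h.measure_inter_preimage_eq_mul (S := ({a, b, c} : Finset ℕ))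
    (sets := sets) (fun i _ => by
      simp only [hsets]
      split_ifs
      · exact hS
      · exact hT
      · exact hU
      · exact MeasurableSet.univ)
  have hsa : sets a = S := by simp [hsets]
  have hsb : sets b = T := by simp [hsets, hab.symm]
  have hsc : sets c = U := by simp [hsets, hac.symm, hbc.symm]
  have hmem1 : a ∉ ({b, c} : Finset ℕ) := by simp [hab, hac]
  have hmem2 : b ∉ ({c} : Finset ℕ) := by simp [hbc]
  rw [show ({a, b, c} : Finset ℕ) = insert a (insert b ({c} : Finset ℕ)) from rfl] at H
  rw [Finset.set_biInter_insert, Finset.set_biInter_insert, Finset.set_biInter_singleton,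
    Finset.prod_insert hmem1, Finset.prod_insert hmem2, Finset.prod_singleton,
    hsa, hsb, hsc] at H
  rw [Set.inter_assoc, H, mul_assoc]

variable {μ : Measure (ℝ × ℝ)} [IsProbabilityMeasure μ]
  {F G : Measure ℝ} [IsProbabilityMeasure F] [IsProbabilityMeasure G]
  {θ : ℝ}

omit [IsProbabilityMeasure μ] [IsProbabilityMeasure F] in
lemma marg_fst' (hmargF : μ.map Prod.fst = F) (s : Set ℝ) (hs : MeasurableSet s) :
    μ (s ×ˢ (Set.univ : Set ℝ)) = F s := by
  rw [← hmargF, Measure.map_apply measurable_fst hs]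
  congr 1
  ext p
  simp

omit [IsProbabilityMeasure μ] [IsProbabilityMeasure G] in
lemma marg_snd' (hmargG : μ.map Prod.snd = G) (s : Set ℝ) (hs : MeasurableSet s) :
    μ ((Set.univ : Set ℝ) ×ˢ s) = G s := by
  rw [← hmargG, Measure.map_apply measurable_snd hs]
  congr 1
  ext p
  simp

omit [IsProbabilityMeasure F] [IsProbabilityMeasure G] in
lemma split_snd' (s : Set ℝ) (hs : MeasurableSet s) (b : ℝ) :
    (μ (s ×ˢ (Set.univ : Set ℝ))).toReal
      = (μ (s ×ˢ Set.Iic b)).toReal + (μ (s ×ˢ Set.Ioi b)).toReal := by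
  rw [← ENNReal.toReal_add (measure_ne_top μ _) (measure_ne_top μ _)]
  congr 1
  rw [← measure_union ?_ (hs.prod measurableSet_Ioi)]
  · congr 1
    rw [← Set.prod_union, Set.Iic_union_Ioi]
  · exact Set.disjoint_prod.2 (Or.inr (Set.Iic_disjoint_Ioi le_rfl))

omit [IsProbabilityMeasure F] [IsProbabilityMeasure G] in
lemma split_fst' (s : Set ℝ) (hs : MeasurableSet s) (a : ℝ) :
    (μ ((Set.univ : Set ℝ) ×ˢ s)).toReal
      = (μ (Set.Iic a ×ˢ s)).toReal + (μ (Set.Ioi a ×ˢ s)).toReal := by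
  rw [← ENNReal.toReal_add (measure_ne_top μ _) (measure_ne_top μ _)]
  congr 1
  rw [← measure_union ?_ (measurableSet_Ioi.prod hs)]
  · congr 1
    rw [← Set.union_prod, Set.Iic_union_Ioi]
  · exact Set.disjoint_prod.2 (Or.inl (Set.Iic_disjoint_Ioi le_rfl))

lemma keyIneq1' (hmargF : μ.map Prod.fst = F) (hmargG : μ.map Prod.snd = G)
    (hθ : θ ∈ Set.Icc (-1 : ℝ) 1)
    (hFGM : ∀ x y : ℝ, (μ (Set.Iic x ×ˢ Set.Iic y)).toReal
      = (F (Set.Iic x)).toReal * (G (Set.Iic y)).toReal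
        * (1 + θ * mtail F x * mtail G y)) (a b : ℝ) :
    (μ (Set.Ioi a ×ˢ Set.Ioi b)).toReal ≤ 2 * mtail F a * mtail G b := by
  have h1 : (μ (Set.Ioi a ×ˢ (Set.univ : Set ℝ))).toReal = mtail F a := by
    rw [marg_fst' hmargF _ measurableSet_Ioi]; rfl
  have h2 := split_snd' (μ := μ) (Set.Ioi a) measurableSet_Ioi b
  have h3 : (μ ((Set.univ : Set ℝ) ×ˢ Set.Iic b)).toReal = (G (Set.Iic b)).toReal := by
    rw [marg_snd' hmargG _ measurableSet_Iic]
  have h4 := split_fst' (μ := μ) (Set.Iic b) measurableSet_Iic a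
  have h5 := hFGM a b
  have hFa := cdf_add_mtail' F a
  have hGb := cdf_add_mtail' G b
  have nn1 : 0 ≤ mtail F a := ENNReal.toReal_nonneg
  have nn2 : 0 ≤ mtail G b := ENNReal.toReal_nonneg
  have nn3 : 0 ≤ (F (Set.Iic a)).toReal := ENNReal.toReal_nonneg
  have nn4 : 0 ≤ (G (Set.Iic b)).toReal := ENNReal.toReal_nonneg
  have nn5 : 0 ≤ (μ (Set.Ioi a ×ˢ Set.Iic b)).toReal := ENNReal.toReal_nonneg
  obtain ⟨hθ1, hθ2⟩ := hθ
  have hFa1 : (F (Set.Iic a)).toReal ≤ 1 := by linarith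
  have hGb1 : (G (Set.Iic b)).toReal ≤ 1 := by linarith
  have e1 : (μ (Set.Ioi a ×ˢ Set.Ioi b)).toReal
      = mtail F a * mtail G b * (1 + θ * (F (Set.Iic a)).toReal * (G (Set.Iic b)).toReal) := by
    have e2 : (μ (Set.Ioi a ×ˢ Set.Ioi b)).toReal
        = mtail F a - ((G (Set.Iic b)).toReal - (μ (Set.Iic a ×ˢ Set.Iic b)).toReal) := by
      linarith
    rw [e2, h5]
    nlinarith [hFa, hGb]
  have hb : θ * (F (Set.Iic a)).toReal * (G (Set.Iic b)).toReal ≤ 1 := by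
    nlinarith [mul_nonneg nn3 nn4]
  rw [e1]
  nlinarith [mul_nonneg (mul_nonneg nn1 nn2) (sub_nonneg.2 hb)]

lemma keyIneq2' (hmargF : μ.map Prod.fst = F) (hmargG : μ.map Prod.snd = G)
    (hθ : θ ∈ Set.Icc (-1 : ℝ) 1)
    (hFGM : ∀ x y : ℝ, (μ (Set.Iic x ×ˢ Set.Iic y)).toReal
      = (F (Set.Iic x)).toReal * (G (Set.Iic y)).toReal
        * (1 + θ * mtail F x * mtail G y)) (c b : ℝ) :
    (μ (Set.Iio c ×ˢ Set.Ioi b)).toReal ≤ 2 * (F (Set.Iic c)).toReal * mtail G b := by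
  have hmono : (μ (Set.Iio c ×ˢ Set.Ioi b)).toReal ≤ (μ (Set.Iic c ×ˢ Set.Ioi b)).toReal :=
    ENNReal.toReal_mono (measure_ne_top μ _)
      (measure_mono (Set.prod_mono Set.Iio_subset_Iic_self le_rfl))
  have h1 : (μ (Set.Iic c ×ˢ (Set.univ : Set ℝ))).toReal = (F (Set.Iic c)).toReal := by
    rw [marg_fst' hmargF _ measurableSet_Iic]
  have h2 := split_snd' (μ := μ) (Set.Iic c) measurableSet_Iic b
  have h5 := hFGM c b
  have hFc := cdf_add_mtail' F c
  have hGb := cdf_add_mtail' G b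
  have nn1 : 0 ≤ mtail F c := ENNReal.toReal_nonneg
  have nn2 : 0 ≤ mtail G b := ENNReal.toReal_nonneg
  have nn3 : 0 ≤ (F (Set.Iic c)).toReal := ENNReal.toReal_nonneg
  have nn4 : 0 ≤ (G (Set.Iic b)).toReal := ENNReal.toReal_nonneg
  obtain ⟨hθ1, hθ2⟩ := hθ
  have hFc1 : (F (Set.Iic c)).toReal ≤ 1 := by linarith
  have hGb1 : (G (Set.Iic b)).toReal ≤ 1 := by linarith
  have e1 : (μ (Set.Iic c ×ˢ Set.Ioi b)).toReal
      = (F (Set.Iic c)).toReal * mtail G b * (1 - θ * (G (Set.Iic b)).toReal * mtail F c) := by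
    have e2 : (μ (Set.Iic c ×ˢ Set.Ioi b)).toReal
        = (F (Set.Iic c)).toReal - (μ (Set.Iic c ×ˢ Set.Iic b)).toReal := by linarith
    rw [e2, h5]
    nlinarith [hFc, hGb]
  have hb : -1 ≤ θ * (G (Set.Iic b)).toReal * mtail F c := by
    nlinarith [mul_nonneg nn4 nn1]
  have hmtc1 : mtail F c ≤ 1 := by linarith
  have hfin : (μ (Set.Iic c ×ˢ Set.Ioi b)).toReal ≤ 2 * (F (Set.Iic c)).toReal * mtail G b := by
    rw [e1]
    nlinarith [mul_nonneg (mul_nonneg nn3 nn2)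
      (by linarith : (0:ℝ) ≤ 1 + θ * (G (Set.Iic b)).toReal * mtail F c)]
  linarith

end Aux
set_option maxHeartbeats 2000000
theorem stmt18 {Ω : Type*} [MeasurableSpace Ω] (P : Measure Ω) [IsProbabilityMeasure P]
    (n : ℕ) (hn : 2 ≤ n) (X Y : ℕ → Ω → ℝ)
    (hmeas : ∀ i, Measurable (fun ω => (X i ω, Y i ω)))
    (hindep : ProbabilityTheory.iIndepFun
      (fun i ω => (X i ω, Y i ω)) P)
    (μ : Measure (ℝ × ℝ)) (hid : ∀ i, Measure.map (fun ω => (X i ω, Y i ω)) P = μ)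
    (F G : Measure ℝ) [IsProbabilityMeasure F] [IsProbabilityMeasure G]
    (hmargF : μ.map Prod.fst = F) (hmargG : μ.map Prod.snd = G)
    (α : ℝ) (hα : 0 < α)
    (hrvF : ∀ t : ℝ, 0 < t →
      Tendsto (fun x => mtail F (t * x) / mtail F x) atTop (nhds (t ^ (-α))))
    (hrvG : ∀ t : ℝ, 0 < t →
      Tendsto (fun x => mtail G (t * x) / mtail G x) atTop (nhds (t ^ (-α))))
    (θ : ℝ) (hθ : θ ∈ Set.Icc (-1 : ℝ) 1)
    (hFGM : ∀ x y : ℝ, (μ (Set.Iic x ×ˢ Set.Iic y)).toReal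
      = (F (Set.Iic x)).toReal * (G (Set.Iic y)).toReal
        * (1 + θ * mtail F x * mtail G y))
    (hleft : (fun x => (F (Set.Iic (-x))).toReal) =O[atTop] fun x => mtail F x)
    (ε : ℝ) (hε : 0 < ε) (hε1 : ε < 1) (k : ℕ) (hk : k < n) :
    ∀ δ > (0 : ℝ), ∃ M : ℝ, ∀ x ≥ M, ∀ y ≥ M, ∀ u ≥ ε,
      (P {ω | u * x < max (-(X k ω)) 0
          ∧ x < ∑ i ∈ Finset.range n, X i ω
          ∧ y < ∑ i ∈ Finset.range n, Y i ω}).toReal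
        ≤ δ * (mtail F (max u 1 * x) * mtail G y) := by
  classical
  intro δ hδ
  haveI hμprob : IsProbabilityMeasure μ := by
    rw [← hid 0]; exact Measure.isProbabilityMeasure_map (hmeas 0).aemeasurable
  have hn0 : (0 : ℝ) < n := by positivity
  -- constant from the left-tail condition
  obtain ⟨C, hCpos, hCO⟩ := hleft.exists_pos
  obtain ⟨N₀, hC⟩ := hCO.bound.exists_forall_of_atTop
  have hC' : ∀ t ≥ N₀, (F (Set.Iic (-t))).toReal ≤ C * mtail F t := by
    intro t ht
    have := hC t ht
    rwa [Real.norm_of_nonneg ENNReal.toReal_nonneg,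
      Real.norm_of_nonneg (mtail_nonneg' F t)] at this
  -- constant K1 for F
  set K1 : ℝ := ε ^ (-α) + 1 with hK1def
  have hK1pos : 0 < K1 := by positivity
  have hK1ge1 : 1 ≤ K1 := by
    have : (0:ℝ) < ε ^ (-α) := Real.rpow_pos_of_pos hε _
    linarith
  obtain ⟨M1, hM1⟩ := ratio_bound' (fun x => mtail_nonneg' F x)
    (Real.rpow_pos_of_pos hε (-α)) (hrvF ε hε)
  -- constant K2 for G
  have hninv : (0:ℝ) < (n : ℝ)⁻¹ := by positivity
  set K2 : ℝ := ((n : ℝ)⁻¹) ^ (-α) + 1 with hK2def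
  have hK2pos : 0 < K2 := by positivity
  obtain ⟨M2, hM2⟩ := ratio_bound' (fun x => mtail_nonneg' G x)
    (Real.rpow_pos_of_pos hninv (-α)) (hrvG _ hninv)
  -- smallness constant
  set D : ℝ := (n : ℝ) * (n : ℝ) * (2 * C * K1 * K2) with hDdef
  have hDpos : 0 < D := by positivity
  set δ' : ℝ := δ / (D + 1) with hδ'def
  have hδ'pos : 0 < δ' := by positivity
  obtain ⟨M3, hM3⟩ := ((mtail_tendsto_zero' F).eventually_lt_const hδ'pos).exists_forall_of_atTop
  -- the threshold
  refine ⟨max 1 (max M1 (max M2 (max (N₀ / ε) ((n : ℝ) * M3)))), fun x hx y hy u hu => ?_⟩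
  have hx1 : (1:ℝ) ≤ x := le_trans (le_max_left _ _) hx
  have hy1 : (1:ℝ) ≤ y := le_trans (le_max_left _ _) hy
  have hx0 : (0:ℝ) < x := by linarith
  have hy0 : (0:ℝ) < y := by linarith
  have hxM1 : M1 ≤ x := le_trans (le_trans (le_max_left _ _) (le_max_right _ _)) hx
  have hyM2 : M2 ≤ y :=
    le_trans (le_trans (le_trans (le_max_left _ _) (le_max_right _ _)) (le_max_right _ _)) hy
  have hxN : N₀ ≤ ε * x := by
    have h1 : N₀ / ε ≤ x :=
      le_trans (le_trans (le_trans (le_trans (le_max_left _ _) (le_max_right _ _))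
        (le_max_right _ _)) (le_max_right _ _)) hx
    calc N₀ = N₀ / ε * ε := by field_simp
      _ ≤ x * ε := mul_le_mul_of_nonneg_right h1 hε.le
      _ = ε * x := mul_comm _ _
  have hxM3 : M3 ≤ x / n := by
    have h1 : (n : ℝ) * M3 ≤ x :=
      le_trans (le_trans (le_trans (le_trans (le_max_right _ _) (le_max_right _ _))
        (le_max_right _ _)) (le_max_right _ _)) hx
    rw [le_div_iff₀ hn0]
    linarith [mul_comm (n : ℝ) M3]
  have hu0 : 0 < u := lt_of_lt_of_le hε hu
  have hux0 : 0 < u * x := mul_pos hu0 hx0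
  -- abbreviations
  set fu : ℝ := mtail F (u * x) with hfu
  set fn : ℝ := mtail F (x / n) with hfn
  set gn : ℝ := mtail G (y / n) with hgn
  set T1 : ℝ := mtail F (max u 1 * x) with hT1
  set gy : ℝ := mtail G y with hgy
  have hfu0 : 0 ≤ fu := mtail_nonneg' F _
  have hfn0 : 0 ≤ fn := mtail_nonneg' F _
  have hgn0 : 0 ≤ gn := mtail_nonneg' G _
  have hT10 : 0 ≤ T1 := mtail_nonneg' F _
  have hgy0 : 0 ≤ gy := mtail_nonneg' G _
  -- key tail comparisons
  have hfuT1 : fu ≤ K1 * T1 := by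
    rcases le_or_gt 1 u with h1u | h1u
    · have : max u 1 = u := max_eq_left h1u
      rw [hfu, hT1, this]
      have h0 := mtail_nonneg' F (u * x)
      have hpow : (0:ℝ) < ε ^ (-α) := Real.rpow_pos_of_pos hε _
      nlinarith [mul_nonneg hpow.le h0]
    · have hmax : max u 1 = 1 := max_eq_right h1u.le
      have h1 : fu ≤ mtail F (ε * x) := by
        rw [hfu]
        exact mtail_anti' F (mul_le_mul_of_nonneg_right hu hx0.le)
      have h2 : mtail F (ε * x) ≤ K1 * mtail F x := hM1 x hxM1
      rw [hT1, hmax, one_mul]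
      linarith
  have hgngy : gn ≤ K2 * gy := by
    have h1 : y / n = (n : ℝ)⁻¹ * y := by field_simp
    rw [hgn, h1, hgy]
    exact hM2 y hyM2
  have hfnsmall : fn ≤ δ' := (hM3 _ hxM3).le
  -- the left-tail bound at u*x
  have hFleft : (F (Set.Iic (-(u * x)))).toReal ≤ C * fu := by
    refine hC' (u * x) ?_
    calc N₀ ≤ ε * x := hxN
      _ ≤ u * x := mul_le_mul_of_nonneg_right hu hx0.le
  -- the map identity
  have hP2μ : ∀ (l : ℕ) (S : Set (ℝ × ℝ)), MeasurableSet S →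
      P ((fun ω => (X l ω, Y l ω)) ⁻¹' S) = μ S := by
    intro l S hS
    rw [← hid l, Measure.map_apply (hmeas l) hS]
  -- the covering events
  set A : ℕ → ℕ → Set Ω := fun i j =>
    {ω | X k ω < -(u * x) ∧ x / n < X i ω ∧ y / n < Y j ω} with hA
  set er : Finset ℕ := (Finset.range n).erase k with her
  set rn : Finset ℕ := Finset.range n with hrn
  -- inclusion
  have hsub : {ω | u * x < max (-(X k ω)) 0
      ∧ x < ∑ i ∈ Finset.range n, X i ω
      ∧ y < ∑ i ∈ Finset.range n, Y i ω} ⊆ ⋃ i ∈ er, ⋃ j ∈ rn, A i j := by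
    intro ω hω
    obtain ⟨h1, h2, h3⟩ := hω
    have hXk : X k ω < -(u * x) := by
      rcases lt_max_iff.mp h1 with h | h
      · linarith
      · linarith
    have hkmem : k ∈ Finset.range n := Finset.mem_range.2 hk
    have hsum : x < ∑ i ∈ er, X i ω := by
      have := Finset.sum_erase_add (Finset.range n) (fun i => X i ω) hkmem
      rw [her]
      have hXkneg : X k ω < 0 := by linarith
      linarith
    have hcard : (er.card : ℝ) = (n : ℝ) - 1 := by
      rw [her, Finset.card_erase_of_mem hkmem, Finset.card_range]
      have : (1:ℕ) ≤ n := by omega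
      push_cast [Nat.cast_sub this]
      ring
    have hi : ∃ i ∈ er, x / n < X i ω := by
      by_contra hcon
      push_neg at hcon
      have hb := Finset.sum_le_card_nsmul er (fun i => X i ω) (x / n) hcon
      rw [nsmul_eq_mul] at hb
      have hxn : 0 < x / n := by positivity
      have : (er.card : ℝ) * (x / n) = x - x / n := by
        rw [hcard]; field_simp
      linarith
    have hj : ∃ j ∈ rn, y / n < Y j ω := by
      by_contra hcon
      push_neg at hcon
      have hb := Finset.sum_le_card_nsmul rn (fun j => Y j ω) (y / n) hcon
      rw [nsmul_eq_mul] at hb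
      have hcard2 : (rn.card : ℝ) = (n : ℝ) := by rw [hrn, Finset.card_range]
      have : (rn.card : ℝ) * (y / n) = y := by rw [hcard2]; field_simp
      rw [hrn] at hb
      rw [hrn] at hcard2
      have hyn : (Finset.range n).card • (y / n) = y := by
        rw [nsmul_eq_mul, Finset.card_range]; field_simp
      linarith [Finset.sum_le_card_nsmul (Finset.range n) (fun j => Y j ω) (y / n)
        (by rw [hrn] at hcon; exact hcon), hyn]
    obtain ⟨i, hiM, hXi⟩ := hi
    obtain ⟨j, hjM, hYj⟩ := hj
    simp only [Set.mem_iUnion]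
    exact ⟨i, hiM, j, hjM, hXk, hXi, hYj⟩
  -- per-term bound
  set B : ℝ := 2 * C * fu * fn * gn with hB
  have hB0 : 0 ≤ B := by positivity
  have hterm : ∀ i ∈ er, ∀ j ∈ rn, (P (A i j)).toReal ≤ B := by
    intro i hiM j hjM
    have hik : i ≠ k := (Finset.mem_erase.1 hiM).1
    have hki : k ≠ i := hik.symm
    have hμIoiu : (μ (Set.Ioi (x / n) ×ˢ (Set.univ : Set ℝ))).toReal = fn := by
      rw [marg_fst' hmargF _ measurableSet_Ioi]; rfl
    have hμunivIoi : (μ ((Set.univ : Set ℝ) ×ˢ Set.Ioi (y / n))).toReal = gn := by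
      rw [marg_snd' hmargG _ measurableSet_Ioi]; rfl
    have hμIio : (μ (Set.Iio (-(u * x)) ×ˢ (Set.univ : Set ℝ))).toReal ≤ C * fu := by
      refine le_trans ?_ hFleft
      rw [← marg_fst' hmargF _ measurableSet_Iic]
      exact ENNReal.toReal_mono (measure_ne_top μ _)
        (measure_mono (Set.prod_mono Set.Iio_subset_Iic_self le_rfl))
    rcases eq_or_ne j k with rfl | hjk
    · -- j = k
      have hAeq : A i j = (fun ω => (X j ω, Y j ω)) ⁻¹' (Set.Iio (-(u * x)) ×ˢ Set.Ioi (y / n))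
          ∩ (fun ω => (X i ω, Y i ω)) ⁻¹' (Set.Ioi (x / n) ×ˢ (Set.univ : Set ℝ)) := by
        ext ω
        simp only [hA, Set.mem_setOf_eq, Set.mem_inter_iff, Set.mem_preimage, Set.mem_prod,
          Set.mem_Iio, Set.mem_Ioi, Set.mem_univ, and_true]
        tauto
      rw [hAeq, (hindep.indepFun hki).measure_inter_preimage_eq_mul _ _
        (measurableSet_Iio.prod measurableSet_Ioi) (measurableSet_Ioi.prod MeasurableSet.univ),
        ENNReal.toReal_mul, hP2μ _ _ (measurableSet_Iio.prod measurableSet_Ioi),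
        hP2μ _ _ (measurableSet_Ioi.prod MeasurableSet.univ)]
      have h1 : (μ (Set.Iio (-(u * x)) ×ˢ Set.Ioi (y / n))).toReal
          ≤ 2 * (C * fu) * gn := by
        have := keyIneq2' hmargF hmargG hθ hFGM (-(u * x)) (y / n)
        have h2 : 2 * (F (Set.Iic (-(u * x)))).toReal * mtail G (y / n) ≤ 2 * (C * fu) * gn := by
          rw [hgn]
          have h9 := mul_le_mul_of_nonneg_right hFleft (mtail_nonneg' G (y / n))
          linarith [h9]
        linarith
      rw [hμIoiu, hB]
      calc (μ (Set.Iio (-(u * x)) ×ˢ Set.Ioi (y / n))).toReal * fn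
          ≤ (2 * (C * fu) * gn) * fn := mul_le_mul_of_nonneg_right h1 hfn0
        _ = 2 * C * fu * fn * gn := by ring
    · rcases eq_or_ne j i with rfl | hji
      · -- j = i
        have hAeq : A j j = (fun ω => (X k ω, Y k ω)) ⁻¹' (Set.Iio (-(u * x)) ×ˢ (Set.univ : Set ℝ))
            ∩ (fun ω => (X j ω, Y j ω)) ⁻¹' (Set.Ioi (x / n) ×ˢ Set.Ioi (y / n)) := by
          ext ω
          simp only [hA, Set.mem_setOf_eq, Set.mem_inter_iff, Set.mem_preimage, Set.mem_prod,
            Set.mem_Iio, Set.mem_Ioi, Set.mem_univ, and_true]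
          try tauto
        rw [hAeq, (hindep.indepFun hki).measure_inter_preimage_eq_mul _ _
          (measurableSet_Iio.prod MeasurableSet.univ) (measurableSet_Ioi.prod measurableSet_Ioi),
          ENNReal.toReal_mul, hP2μ _ _ (measurableSet_Iio.prod MeasurableSet.univ),
          hP2μ _ _ (measurableSet_Ioi.prod measurableSet_Ioi)]
        have h1 := keyIneq1' hmargF hmargG hθ hFGM (x / n) (y / n)
        rw [hB]
        calc (μ (Set.Iio (-(u * x)) ×ˢ (Set.univ : Set ℝ))).toReal
              * (μ (Set.Ioi (x / n) ×ˢ Set.Ioi (y / n))).toReal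
            ≤ (C * fu) * (2 * fn * gn) := by
              refine mul_le_mul hμIio ?_ ENNReal.toReal_nonneg (by positivity)
              rw [← hfn, ← hgn] at h1
              exact h1
          _ = 2 * C * fu * fn * gn := by ring
      · -- j ∉ {i, k}
        have hAeq : A i j = (fun ω => (X k ω, Y k ω)) ⁻¹' (Set.Iio (-(u * x)) ×ˢ (Set.univ : Set ℝ))
            ∩ (fun ω => (X i ω, Y i ω)) ⁻¹' (Set.Ioi (x / n) ×ˢ (Set.univ : Set ℝ))
            ∩ (fun ω => (X j ω, Y j ω)) ⁻¹' ((Set.univ : Set ℝ) ×ˢ Set.Ioi (y / n)) := by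
          ext ω
          simp only [hA, Set.mem_setOf_eq, Set.mem_inter_iff, Set.mem_preimage, Set.mem_prod,
            Set.mem_Iio, Set.mem_Ioi, Set.mem_univ, and_true, true_and]
          try tauto
        rw [hAeq, indep3' hindep hki hjk.symm hji.symm
          (measurableSet_Iio.prod MeasurableSet.univ)
          (measurableSet_Ioi.prod MeasurableSet.univ)
          (MeasurableSet.univ.prod measurableSet_Ioi),
          ENNReal.toReal_mul, ENNReal.toReal_mul,
          hP2μ _ _ (measurableSet_Iio.prod MeasurableSet.univ),
          hP2μ _ _ (measurableSet_Ioi.prod MeasurableSet.univ),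
          hP2μ _ _ (MeasurableSet.univ.prod measurableSet_Ioi)]
        rw [hμIoiu, hμunivIoi, hB]
        calc (μ (Set.Iio (-(u * x)) ×ˢ (Set.univ : Set ℝ))).toReal * fn * gn
            ≤ (C * fu) * fn * gn := by
              refine mul_le_mul_of_nonneg_right (mul_le_mul_of_nonneg_right hμIio hfn0) hgn0
          _ ≤ 2 * C * fu * fn * gn := by
              linarith [mul_nonneg (mul_nonneg (mul_nonneg hCpos.le hfu0) hfn0) hgn0]
  -- union bound
  have hPE : (P {ω | u * x < max (-(X k ω)) 0
      ∧ x < ∑ i ∈ Finset.range n, X i ω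
      ∧ y < ∑ i ∈ Finset.range n, Y i ω}).toReal
      ≤ ∑ i ∈ er, ∑ j ∈ rn, (P (A i j)).toReal := by
    have h1 : P {ω | u * x < max (-(X k ω)) 0
        ∧ x < ∑ i ∈ Finset.range n, X i ω
        ∧ y < ∑ i ∈ Finset.range n, Y i ω} ≤ ∑ i ∈ er, ∑ j ∈ rn, P (A i j) :=
      (measure_mono hsub).trans ((measure_biUnion_finset_le _ _).trans
        (Finset.sum_le_sum fun i _ => measure_biUnion_finset_le _ _))
    have h2 := ENNReal.toReal_mono (a := P {ω | u * x < max (-(X k ω)) 0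
        ∧ x < ∑ i ∈ Finset.range n, X i ω
        ∧ y < ∑ i ∈ Finset.range n, Y i ω}) ?_ h1
    · rw [ENNReal.toReal_sum (fun i _ => ?_)] at h2
      · refine h2.trans (le_of_eq (Finset.sum_congr rfl fun i _ => ?_))
        exact ENNReal.toReal_sum (fun j _ => measure_ne_top P _)
      · exact ENNReal.sum_ne_top.2 fun j _ => measure_ne_top P _
    · exact ENNReal.sum_ne_top.2 fun i _ =>
        ENNReal.sum_ne_top.2 fun j _ => measure_ne_top P _
  -- summing the bound
  have hsumB : ∑ i ∈ er, ∑ j ∈ rn, (P (A i j)).toReal ≤ (n : ℝ) * ((n : ℝ) * B) := by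
    have h1 : ∑ i ∈ er, ∑ j ∈ rn, (P (A i j)).toReal ≤ ∑ i ∈ er, (n : ℝ) * B := by
      refine Finset.sum_le_sum fun i hiM => ?_
      have h2 : ∑ j ∈ rn, (P (A i j)).toReal ≤ ∑ j ∈ rn, B :=
        Finset.sum_le_sum fun j hjM => hterm i hiM j hjM
      rw [Finset.sum_const, nsmul_eq_mul] at h2
      refine h2.trans ?_
      have hcr : (rn.card : ℝ) ≤ (n : ℝ) := by
        rw [hrn, Finset.card_range]
      exact mul_le_mul_of_nonneg_right hcr hB0
    rw [Finset.sum_const, nsmul_eq_mul] at h1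
    refine h1.trans ?_
    have hcard : (er.card : ℝ) ≤ (n : ℝ) := by
      have h : er.card ≤ n := by
        rw [her, Finset.card_erase_of_mem (Finset.mem_range.2 hk), Finset.card_range]
        omega
      exact_mod_cast h
    have hnB : 0 ≤ (n : ℝ) * B := by positivity
    exact mul_le_mul_of_nonneg_right hcard hnB
  -- final chain
  have hBfinal : (n : ℝ) * ((n : ℝ) * B) ≤ δ * (T1 * gy) := by
    have h1 : fu * fn * gn ≤ (K1 * T1) * δ' * (K2 * gy) := by
      have ha : fu * fn ≤ (K1 * T1) * δ' :=
        mul_le_mul hfuT1 hfnsmall hfn0 (by positivity)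
      have hb : fu * fn * gn ≤ (K1 * T1) * δ' * gn :=
        mul_le_mul_of_nonneg_right ha hgn0
      have hc : (K1 * T1) * δ' * gn ≤ (K1 * T1) * δ' * (K2 * gy) := by
        refine mul_le_mul_of_nonneg_left hgngy (by positivity)
      linarith
    have h2 : (n : ℝ) * ((n : ℝ) * B) ≤ D * δ' * (T1 * gy) := by
      have hmul := mul_le_mul_of_nonneg_left h1
        (show (0:ℝ) ≤ (n:ℝ) * (n:ℝ) * (2 * C) by positivity)
      calc (n : ℝ) * ((n : ℝ) * B) = (n:ℝ) * (n:ℝ) * (2 * C) * (fu * fn * gn) := by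
            rw [hB]; ring
        _ ≤ (n:ℝ) * (n:ℝ) * (2 * C) * ((K1 * T1) * δ' * (K2 * gy)) := hmul
        _ = D * δ' * (T1 * gy) := by rw [hDdef]; ring
    have h3 : D * δ' ≤ δ := by
      have hD1 : (0:ℝ) < D + 1 := by linarith
      have he : δ' * (D + 1) = δ := by
        rw [hδ'def]
        field_simp
      linarith [he, hδ'pos.le]
    have hT1gy : 0 ≤ T1 * gy := mul_nonneg hT10 hgy0
    calc (n : ℝ) * ((n : ℝ) * B) ≤ D * δ' * (T1 * gy) := h2
      _ ≤ δ * (T1 * gy) := mul_le_mul_of_nonneg_right h3 hT1gy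
  exact le_trans hPE (le_trans hsumB hBfinal)
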